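/- arXiv:2409.01292 — 3 statements merged into one kernel-verified Lean document; each statement's English description precedes it below -/
import Mathlib

section
/- Let (X,d,μ) be a metric measure space with 0 < μ(B(x,r)) < ∞ for all x, r, and 1 < p < ∞, θ > 0. Suppose the Besov space B^θ_{p,p}(X) is a finite-dimensional vector space (of dimension k ∈ ℕ). Then every function in B^θ_{p,p}(X) is essentially bounded. (Proof idea: an unbounded nonnegative f yields infinitely many linearly independent truncations f_i = max{f - n_i, 0}.) -/
open MeasureTheory Metric Filter ENNReal Topology

noncomputable def besovEnergy {X : Type*} [MetricSpace X] [MeasurableSpace X]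
    (μ : Measure X) (p θ : ℝ) (u : X → ℝ) : ℝ≥0∞ :=
  ∫⁻ x, ∫⁻ y, ENNReal.ofReal (|u x - u y| ^ p) /
    (ENNReal.ofReal (dist x y ^ (θ * p)) * μ (ball x (dist x y))) ∂μ ∂μ

noncomputable def ballEnergy {X : Type*} [MetricSpace X] [MeasurableSpace X]
    (μ : Measure X) (p θ : ℝ) (u : X → ℝ) (t : ℝ) : ℝ≥0∞ :=
  ∫⁻ x, (∫⁻ y in ball x t, ENNReal.ofReal (|u x - u y| ^ p) ∂μ) /
    (μ (ball x t) * ENNReal.ofReal (t ^ (θ * p))) ∂μ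

noncomputable def ksEnergy {X : Type*} [MetricSpace X] [MeasurableSpace X]
    (μ : Measure X) (p θ : ℝ) (u : X → ℝ) : ℝ≥0∞ :=
  Filter.limsup (ballEnergy μ p θ u) (𝓝[>] (0:ℝ))

noncomputable def binfEnergy {X : Type*} [MetricSpace X] [MeasurableSpace X]
    (μ : Measure X) (p θ : ℝ) (u : X → ℝ) : ℝ≥0∞ :=
  ⨆ t : Set.Ioi (0:ℝ), ballEnergy μ p θ u t

/-- The doubling property together with positivity and finiteness of the measure of balls. -/
def IsDoublingMeas {X : Type*} [MetricSpace X] [MeasurableSpace X] (μ : Measure X) : Prop :=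
  ∃ C : ℝ≥0∞, C < ⊤ ∧ ∀ x : X, ∀ r : ℝ, 0 < r →
    μ (ball x (2 * r)) ≤ C * μ (ball x r) ∧ 0 < μ (ball x r) ∧ μ (ball x r) < ⊤

/-- Membership in the Besov space `B^θ_{p,p}(X)`. -/
def MemBesov {X : Type*} [MetricSpace X] [MeasurableSpace X]
    (μ : Measure X) (p θ : ℝ) (u : X → ℝ) : Prop :=
  MemLp u (ENNReal.ofReal p) μ ∧ besovEnergy μ p θ u < ⊤

/-! An essentially unbounded `f ∈ B^θ_{p,p}(X)` admits levels `0 = a₀ < a₁ < ⋯` whose bands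
`{aₙ < |f| ≤ aₙ₊₁}` all have positive measure. The truncations `tₙ = max (|f| - aₙ) 0` are
`1`-Lipschitz images of `f` vanishing at `0`, hence stay in the Besov space, and they are linearly
independent modulo null functions: `tₙ` is positive on the `n`-th band, where every later truncation
vanishes. So `k + 1` of them cannot lie in the a.e. span of `k` functions.

Functions modulo `μ`-a.e. equality are handled as germs along `ae μ`, which form a vector space
without any measurability requirement. -/

section Germs

variable {X K : Type*} [Field K] {l : Filter X}

theorem Filter.Germ.coe_sum_mul {ι : Type*} (s : Finset ι) (c : ι → K) (f : ι → X → K) :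
    ((fun x => ∑ i ∈ s, c i * f i x : X → K) : Germ l K) = ∑ i ∈ s, c i • (f i : Germ l K) := by
  change _ = ∑ i ∈ s, Germ.coeAddHom l (c i • f i)
  rw [← map_sum]
  congr 1
  ext x
  simp [Finset.sum_apply]

theorem card_le_of_linearIndependent_germ {ι κ : Type*} [Fintype ι] [Fintype κ]
    {v : ι → X → K} (b : κ → X → K) (hv : LinearIndependent K fun i => (v i : Germ l K))
    (hspan : ∀ i, ∃ c : κ → K, v i =ᶠ[l] fun x => ∑ j, c j * b j x) :
    Fintype.card ι ≤ Fintype.card κ := by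
  let B : κ → Germ l K := fun j => b j
  have hle : Submodule.span K (Set.range fun i => (v i : Germ l K)) ≤
      Submodule.span K (Set.range B) := by
    refine Submodule.span_le.2 (Set.range_subset_iff.2 fun i => ?_)
    obtain ⟨c, hc⟩ := hspan i
    have hcomb : (v i : Germ l K) = ∑ j, c j • B j := by
      rw [(Germ.coe_eq (l := l)).2 hc]
      exact Germ.coe_sum_mul _ _ _
    rw [SetLike.mem_coe, hcomb]
    exact Submodule.sum_mem _ fun j _ => Submodule.smul_mem _ _ (Submodule.subset_span ⟨j, rfl⟩)
  have : FiniteDimensional K (Submodule.span K (Set.range B)) :=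
    FiniteDimensional.span_of_finite K (Set.finite_range B)
  calc Fintype.card ι ≤ (Set.range fun i => (v i : Germ l K)).finrank K :=
        linearIndependent_iff_card_le_finrank_span.1 hv
    _ ≤ (Set.range B).finrank K := Submodule.finrank_mono hle
    _ ≤ Fintype.card κ := finrank_range_le_card B

theorem linearIndependent_germ_of_triangular {t : ℕ → X → K} {E : ℕ → Set X}
    (hE : ∀ n, ∃ᶠ x in l, x ∈ E n) (hdiag : ∀ n, ∀ x ∈ E n, t n x ≠ 0)
    (hupper : ∀ m n, n < m → ∀ x ∈ E n, t m x = 0) :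
    LinearIndependent K fun n => (t n : Germ l K) := by
  rw [linearIndependent_iff']
  intro s c hsum
  have hzero : ∀ᶠ x in l, ∑ i ∈ s, c i * t i x = 0 := by
    refine Germ.coe_eq.1 ?_
    change _ = (0 : Germ l K)
    rw [← hsum]
    exact Germ.coe_sum_mul _ _ _
  intro n
  induction n using Nat.strong_induction_on with
  | _ n ih =>
    intro hn
    obtain ⟨x, hxE, hx⟩ := ((hE n).and_eventually hzero).exists
    rw [Finset.sum_eq_single_of_mem n hn fun m hm hmn => ?_] at hx
    · exact (mul_eq_zero.1 hx).resolve_right (hdiag n x hxE)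
    · rcases hmn.lt_or_gt with hlt | hgt
      · rw [ih m hlt hm, zero_mul]
      · rw [hupper m n hgt x hxE, mul_zero]

end Germs

theorem exists_strictMono_frequently_mem_Ioc {X : Type*} {l : Filter X} [CountableInterFilter l]
    {g : X → ℝ} (hg : ∀ M, ∃ᶠ x in l, M < g x) (a₀ : ℝ) :
    ∃ a : ℕ → ℝ, a 0 = a₀ ∧ StrictMono a ∧ ∀ n, ∃ᶠ x in l, g x ∈ Set.Ioc (a n) (a (n + 1)) := by
  have hnext : ∀ r : ℝ, ∃ r', r < r' ∧ ∃ᶠ x in l, g x ∈ Set.Ioc r r' := by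
    intro r
    by_contra! hnone
    have hbands : ∀ᶠ x in l, ∀ n : ℕ, g x ∉ Set.Ioc r (r + n + 1) := by
      refine eventually_countable_forall.2 fun n => hnone _ ?_
      linarith [(n.cast_nonneg : (0 : ℝ) ≤ n)]
    refine hg r (hbands.mono fun x hx hrx => ?_)
    obtain ⟨n, hn⟩ := exists_nat_gt (g x - r)
    exact hx n ⟨hrx, by linarith⟩
  choose next hlt hfreq using hnext
  let a : ℕ → ℝ := fun n => Nat.rec a₀ (fun _ prev => next prev) n
  exact ⟨a, rfl, strictMono_nat_of_lt_succ fun n => hlt (a n), fun n => hfreq (a n)⟩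

section Besov

variable {X : Type*} [MetricSpace X] [MeasurableSpace X] {μ : Measure X} {p θ : ℝ}

theorem MemBesov.comp_lipschitzWith_one {φ : ℝ → ℝ} (hφ : LipschitzWith 1 φ) (hφ0 : φ 0 = 0)
    (hp : 0 ≤ p) {f : X → ℝ} (hf : MemBesov μ p θ f) : MemBesov μ p θ (φ ∘ f) := by
  refine ⟨hφ.comp_memLp hφ0 hf.1, lt_of_le_of_lt ?_ hf.2⟩
  refine lintegral_mono fun x => lintegral_mono fun y => ?_
  have hle : |φ (f x) - φ (f y)| ≤ |f x - f y| := by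
    simpa [Real.dist_eq] using hφ.dist_le_mul (f x) (f y)
  exact ENNReal.div_le_div_right
    (ENNReal.ofReal_le_ofReal (Real.rpow_le_rpow (abs_nonneg _) hle hp)) _

theorem lipschitzWith_max_abs_sub_const_zero (a : ℝ) :
    LipschitzWith 1 fun t : ℝ => max (|t| - a) 0 :=
  LipschitzWith.of_dist_le_mul fun s t => by
    simpa [Real.dist_eq] using (abs_max_sub_max_le_abs _ _ 0).trans
      (by rw [sub_sub_sub_cancel_right]; exact abs_abs_sub_abs_le_abs_sub s t)

end Besov

theorem statement8_general {X : Type*} [MetricSpace X] [MeasurableSpace X]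
    (μ : Measure X)
    (p θ : ℝ) (hp : 1 < p)
    (k : ℕ) (b : Fin k → X → ℝ)
    (hspan : ∀ f : X → ℝ, MemBesov μ p θ f →
      ∃ c : Fin k → ℝ, f =ᵐ[μ] fun x => ∑ i, c i * b i x) :
    ∀ f : X → ℝ, MemBesov μ p θ f → ∃ M : ℝ, ∀ᵐ x ∂μ, |f x| ≤ M := by
  intro f hf
  by_contra! hunbdd
  obtain ⟨a, ha0, ha, hband⟩ := exists_strictMono_frequently_mem_Ioc (l := ae μ)
    (g := fun x => |f x|) (fun M => by simpa [Filter.not_eventually] using hunbdd M) 0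
  let t : ℕ → X → ℝ := fun n x => max (|f x| - a n) 0
  have ha_nonneg : ∀ n, 0 ≤ a n := fun n => ha0 ▸ ha.monotone n.zero_le
  have ht : ∀ n, MemBesov μ p θ (t n) := fun n =>
    hf.comp_lipschitzWith_one (lipschitzWith_max_abs_sub_const_zero (a n))
      (by simp [ha_nonneg n]) (by linarith)
  have hind : LinearIndependent ℝ fun n => (t n : Germ (ae μ) ℝ) :=
    linearIndependent_germ_of_triangular hband
      (fun n x hx => (sub_pos.2 hx.1).trans_le (le_max_left _ _) |>.ne')
      (fun m n hnm x hx => max_eq_right (by linarith [hx.2, ha.monotone (Nat.succ_le_of_lt hnm)]))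
  have hcard := card_le_of_linearIndependent_germ b
    (hind.comp (fun i : Fin (k + 1) => (i : ℕ)) Fin.val_injective) fun i => hspan _ (ht i)
  simp only [Fintype.card_fin] at hcard
  omega

/-- If the Besov space `B^θ_{p,p}(X)` is spanned (up to `μ`-a.e. equality) by finitely many
functions, then every function in `B^θ_{p,p}(X)` is essentially bounded. -/
theorem statement8 {X : Type*} [MetricSpace X] [MeasurableSpace X]
    (μ : Measure X) (hball : ∀ (x : X) (r : ℝ), 0 < r → 0 < μ (ball x r) ∧ μ (ball x r) < ⊤)
    (p θ : ℝ) (hp : 1 < p) (hθ : 0 < θ)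
    (k : ℕ) (b : Fin k → X → ℝ) (hb : ∀ i, MemBesov μ p θ (b i))
    (hspan : ∀ f : X → ℝ, MemBesov μ p θ f →
      ∃ c : Fin k → ℝ, f =ᵐ[μ] fun x => ∑ i, c i * b i x) :
    ∀ f : X → ℝ, MemBesov μ p θ f → ∃ M : ℝ, ∀ᵐ x ∂μ, |f x| ≤ M :=
  statement8_general μ p θ hp k b hspan
end

section
/- Let (X,d,μ) be a metric measure space, 1 < p < ∞, θ > 0, and suppose B^θ_{p,p}(X) has finite dimension k ≥ 1. Then every f ∈ B^θ_{p,p}(X) is μ-a.e. equal to a simple function taking at most k+1 distinct values; if moreover μ(X) < ∞ and k = 1, every f ∈ B^θ_{p,p}(X) is μ-a.e. constant. -/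
open MeasureTheory Metric Filter ENNReal Topology

/-! The essential values of `f` (the support of `μ.map f`) are detected by compositions with
Lipschitz functions vanishing at `0`, which preserve `B^θ_{p,p}`. For finitely many nonzero
essential values `a`, the functions `infDist (f ·) S_a`, where `S_a` consists of `0` and the
other values, are a.e. linearly independent, since a continuous `h` with `h ∘ f = 0` a.e.
vanishes at every essential value of `f`. So there are at most `k` nonzero essential values,
and `f` takes its values in this finite set a.e. When `μ` is finite, constants lie in
`B^θ_{p,p}`, so for `k = 1` every `f` is a.e. a multiple of the constant `1`. -/

section

variable {X : Type*} [MeasurableSpace X] {μ : Measure X}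

theorem Continuous.eq_zero_of_mem_support_map {h : ℝ → ℝ} (hh : Continuous h) {f : X → ℝ}
    (hf : AEMeasurable f μ) (hhf : ∀ᵐ x ∂μ, h (f x) = 0) {a : ℝ} (ha : a ∈ (μ.map f).support) :
    h a = 0 := by
  have hnull : μ.map f {y | h y ≠ 0} = 0 := by
    rw [← ae_iff]
    exact (ae_map_iff hf (isClosed_eq hh continuous_const).measurableSet).mpr hhf
  by_contra hne
  exact Measure.subset_compl_support_of_isOpen (isOpen_ne_fun hh continuous_const) hnull hne ha

theorem card_le_of_ae_eq_sum {k : ℕ} {b : Fin k → X → ℝ} {ι : Type*} [Fintype ι]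
    {u : ι → X → ℝ} (hu : ∀ j, ∃ c : Fin k → ℝ, u j =ᵐ[μ] fun x => ∑ i, c i * b i x)
    (hind : ∀ c : ι → ℝ, (fun x => ∑ j, c j * u j x) =ᵐ[μ] 0 → c = 0) :
    Fintype.card ι ≤ k := by
  choose M hM using hu
  suffices LinearIndependent ℝ M by
    simpa using this.fintype_card_le_finrank
  refine Fintype.linearIndependent_iff.mpr fun c hc => congrFun (hind c ?_)
  filter_upwards [ae_all_iff.mpr hM] with x hx
  have hcoef (i : Fin k) : ∑ j, c j * M j i = 0 := by
    simpa using congrFun hc i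
  calc ∑ j, c j * u j x = ∑ j, c j * ∑ i, M j i * b i x := by simp only [hx]
    _ = ∑ i, (∑ j, c j * M j i) * b i x := by
      simp only [Finset.mul_sum, Finset.sum_mul, mul_assoc]
      exact Finset.sum_comm
    _ = 0 := by simp [hcoef]

theorem exists_ae_eq_const_of_ae_eq_mul {b f : X → ℝ} {c₁ c : ℝ}
    (h₁ : (fun _ => (1 : ℝ)) =ᵐ[μ] fun x => c₁ * b x) (hf : f =ᵐ[μ] fun x => c * b x) :
    ∃ a : ℝ, f =ᵐ[μ] fun _ => a := by
  by_cases hc₁ : c₁ = 0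
  · refine ⟨0, ?_⟩
    filter_upwards [h₁] with x hx
    simp [hc₁] at hx
  · refine ⟨c / c₁, ?_⟩
    filter_upwards [h₁, hf] with x h1 h2
    rw [h2, eq_div_iff hc₁]
    linear_combination -c * h1

end

section

variable {X : Type*} [MetricSpace X] [MeasurableSpace X] {μ : Measure X} {p θ : ℝ}

theorem MemBesov.comp_lipschitzWith {f : X → ℝ} {g : ℝ → ℝ} {K : NNReal}
    (hf : MemBesov μ p θ f) (hg : LipschitzWith K g) (hg0 : g 0 = 0) (hp : 0 ≤ p) :
    MemBesov μ p θ (g ∘ f) := by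
  refine ⟨hg.comp_memLp hg0 hf.1, lt_of_le_of_lt ?_ <|
    ENNReal.mul_lt_top (ofReal_lt_top (r := (K : ℝ) ^ p)) hf.2⟩
  have hpoint (s s' : ℝ) : ENNReal.ofReal (|g s - g s'| ^ p) ≤
      ENNReal.ofReal ((K : ℝ) ^ p) * ENNReal.ofReal (|s - s'| ^ p) := by
    rw [← ENNReal.ofReal_mul (by positivity), ← Real.mul_rpow K.coe_nonneg (abs_nonneg _)]
    gcongr
    simpa [Real.dist_eq] using hg.dist_le_mul s s'
  unfold besovEnergy
  rw [← lintegral_const_mul' _ _ ofReal_ne_top]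
  gcongr with x
  rw [← lintegral_const_mul' _ _ ofReal_ne_top]
  gcongr with y
  rw [← mul_div_assoc]
  exact ENNReal.div_le_div_right (hpoint _ _) _

theorem memBesov_const [IsFiniteMeasure μ] (hp : 0 < p) (c : ℝ) :
    MemBesov μ p θ fun _ => c := by
  refine ⟨memLp_const c, ?_⟩
  simp [besovEnergy, Real.zero_rpow hp.ne']

theorem MemBesov.card_le_of_subset_support {k : ℕ} {b : Fin k → X → ℝ}
    (hspan : ∀ f : X → ℝ, MemBesov μ p θ f →
      ∃ c : Fin k → ℝ, f =ᵐ[μ] fun x => ∑ i, c i * b i x)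
    (hp : 0 ≤ p) {f : X → ℝ} (hf : MemBesov μ p θ f) {A : Finset ℝ}
    (hA : ↑A ⊆ (μ.map f).support) (h0 : (0 : ℝ) ∉ A) : A.card ≤ k := by
  -- `φ a` is a bump at `a` vanishing at `0` and at the other points of `A`
  set S : A → Set ℝ := fun a => ↑((insert 0 A).erase a)
  set φ : A → ℝ → ℝ := fun a s => infDist s (S a)
  have hS0 (a : A) : (0 : ℝ) ∈ S a := by
    simp [S, (ne_of_mem_of_not_mem a.2 h0).symm]
  have hφ_self (a : A) : 0 < φ a a := by
    refine (infDist_pos_iff_notMem_closure ⟨0, hS0 a⟩).mp ?_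
    rw [(Finset.finite_toSet _).isClosed.closure_eq]
    simp
  have hφ_ne {a a' : A} (h : a' ≠ a) : φ a a' = 0 :=
    infDist_zero_of_mem (by simp [S, Subtype.coe_ne_coe.mpr h])
  rw [← Fintype.card_coe]
  have hφf (a : A) : MemBesov μ p θ (φ a ∘ f) :=
    hf.comp_lipschitzWith (lipschitz_infDist_pt (S a)) (infDist_zero_of_mem (hS0 a)) hp
  refine card_le_of_ae_eq_sum (fun a => hspan _ (hφf a)) fun c hc => ?_
  ext a'
  have h := Continuous.eq_zero_of_mem_support_map (h := fun s => ∑ a, c a * φ a s)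
    (by fun_prop) hf.1.aestronglyMeasurable.aemeasurable hc (hA a'.2)
  rw [Finset.sum_eq_single a' (fun a _ ha => by rw [hφ_ne (Ne.symm ha), mul_zero])
    (by simp)] at h
  exact (mul_eq_zero.mp h).resolve_right (hφ_self a').ne'

theorem MemBesov.exists_finset_card_le_ae_mem {k : ℕ} {b : Fin k → X → ℝ}
    (hspan : ∀ f : X → ℝ, MemBesov μ p θ f →
      ∃ c : Fin k → ℝ, f =ᵐ[μ] fun x => ∑ i, c i * b i x)
    (hp : 0 ≤ p) {f : X → ℝ} (hf : MemBesov μ p θ f) :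
    ∃ s : Finset ℝ, s.card ≤ k + 1 ∧ ∀ᵐ x ∂μ, f x ∈ s := by
  have hcard (A : Finset ℝ) (hA : ↑A ⊆ (μ.map f).support) : A.card ≤ k + 1 := by
    have := hf.card_le_of_subset_support hspan hp
      ((Finset.coe_subset.mpr (A.erase_subset 0)).trans hA) (A.notMem_erase 0)
    have := A.pred_card_le_card_erase (a := 0)
    omega
  have hfin : (μ.map f).support.Finite := by
    by_contra hinf
    obtain ⟨A, hA, hAcard⟩ := Set.Infinite.exists_subset_card_eq hinf (k + 2)
    have := hcard A hA
    omega
  refine ⟨hfin.toFinset, hcard _ (by simp), ?_⟩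
  filter_upwards [ae_of_ae_map hf.1.aestronglyMeasurable.aemeasurable Measure.support_mem_ae]
    with x hx
  exact hfin.mem_toFinset.mpr hx

end

theorem statement9_general {X : Type*} [MetricSpace X] [MeasurableSpace X]
    (μ : Measure X)
    (p θ : ℝ) (hp : 1 < p)
    (k : ℕ) (b : Fin k → X → ℝ)
    (hspan : ∀ f : X → ℝ, MemBesov μ p θ f →
      ∃ c : Fin k → ℝ, f =ᵐ[μ] fun x => ∑ i, c i * b i x) :
    (∀ f : X → ℝ, MemBesov μ p θ f →
      ∃ s : Finset ℝ, s.card ≤ k + 1 ∧ ∀ᵐ x ∂μ, f x ∈ s) ∧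
    (μ Set.univ < ⊤ → k = 1 →
      ∀ f : X → ℝ, MemBesov μ p θ f → ∃ c : ℝ, f =ᵐ[μ] fun _ => c) := by
  refine ⟨fun f hf => hf.exists_finset_card_le_ae_mem hspan (by linarith),
    fun hμ hk f hf => ?_⟩
  subst hk
  have : IsFiniteMeasure μ := ⟨hμ⟩
  obtain ⟨c₁, h₁⟩ := hspan _ (memBesov_const (θ := θ) (by linarith) 1)
  obtain ⟨c, hc⟩ := hspan f hf
  exact exists_ae_eq_const_of_ae_eq_mul (c₁ := c₁ 0) (c := c 0) (b := b 0)
    (by simpa using h₁) (by simpa using hc)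

/-- If `B^θ_{p,p}(X)` has finite dimension `k ≥ 1` (witnessed by a basis of `k` functions,
linearly independent and spanning up to `μ`-a.e. equality), then every `f ∈ B^θ_{p,p}(X)` is
`μ`-a.e. equal to a simple function taking at most `k+1` values; and if moreover `μ(X) < ∞`
and `k = 1`, every `f ∈ B^θ_{p,p}(X)` is `μ`-a.e. constant. -/
theorem statement9 {X : Type*} [MetricSpace X] [MeasurableSpace X]
    (μ : Measure X) (hball : ∀ (x : X) (r : ℝ), 0 < r → 0 < μ (ball x r) ∧ μ (ball x r) < ⊤)
    (p θ : ℝ) (hp : 1 < p) (hθ : 0 < θ)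
    (k : ℕ) (hk : 1 ≤ k) (b : Fin k → X → ℝ) (hb : ∀ i, MemBesov μ p θ (b i))
    (hind : ∀ c : Fin k → ℝ, (fun x => ∑ i, c i * b i x) =ᵐ[μ] (fun _ => (0:ℝ)) → c = 0)
    (hspan : ∀ f : X → ℝ, MemBesov μ p θ f →
      ∃ c : Fin k → ℝ, f =ᵐ[μ] fun x => ∑ i, c i * b i x) :
    (∀ f : X → ℝ, MemBesov μ p θ f →
      ∃ s : Finset ℝ, s.card ≤ k + 1 ∧ ∀ᵐ x ∂μ, f x ∈ s) ∧
    (μ Set.univ < ⊤ → k = 1 →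
      ∀ f : X → ℝ, MemBesov μ p θ f → ∃ c : ℝ, f =ᵐ[μ] fun _ => c) :=
  statement9_general μ p θ hp k b hspan
end

section
/- Let n ≥ 2, X = [0,1]^n ∪ [-1,0]^n ⊂ ℝ^n with the Euclidean metric and n-dimensional Lebesgue measure, and E = [0,1]^n. For 1 < p < ∞ and θ > 0, the indicator χ_E satisfies ∫_X ∫_X |χ_E(x)-χ_E(y)|^p / |x-y|^{n+θp} dx dy < ∞ if and only if θp < n. In particular χ_E ∈ B^θ_{p,p}(X) if and only if θp < n. -/
open MeasureTheory Metric Filter ENNReal Topology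

/-- The positive unit cube `[0,1]^n`. -/
def cubeP (n : ℕ) : Set (EuclideanSpace ℝ (Fin n)) := {x | ∀ i, x i ∈ Set.Icc (0:ℝ) 1}

/-- The negative unit cube `[-1,0]^n`. -/
def cubeN (n : ℕ) : Set (EuclideanSpace ℝ (Fin n)) := {x | ∀ i, x i ∈ Set.Icc (-1:ℝ) 0}

/-!
Only pairs with one point in each cube see a jump of `χ_E`, so (as `[0,1]^n ∩ [-1,0]^n` is null)
the energy is `∫_{[0,1]^n} ∫_{[-1,0]^n} |x - y|^{-s}`, `s = n + θp`, plus its mirror image.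
For such pairs `⟪x, y⟫ ≤ 0`, hence `|x - y| ≥ max (|x|, |y|)` and the double integral is at most
`(∫_{[0,1]^n} |x|^{-s/2})²`, finite for `s < 2n` by polar coordinates. Conversely, for
`x ∈ [0,r]^n` the inner integral over `[-r,0]^n` alone is `≳ r^{n-s}`, and summing over the
dyadic shells `[0,2^{-k}]^n \ [0,2^{-k-1}]^n` gives a divergent series once `s ≥ 2n`.
The Besov energy is comparable to this one because `X` is Ahlfors `n`-regular.
-/

lemma ENNReal.rpow_neg_le_rpow_neg {x y : ℝ≥0∞} {s : ℝ} (hs : 0 ≤ s) (h : x ≤ y) :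
    y ^ (-s) ≤ x ^ (-s) := by
  rw [ENNReal.rpow_neg, ENNReal.rpow_neg]
  exact ENNReal.inv_le_inv.2 (ENNReal.rpow_le_rpow h hs)

lemma inv_ofReal_dist_rpow {X : Type*} [PseudoMetricSpace X] {s : ℝ} (hs : 0 ≤ s) (x y : X) :
    (ENNReal.ofReal (dist x y ^ s))⁻¹ = edist x y ^ (-s) := by
  rw [edist_dist, ENNReal.rpow_neg, ENNReal.ofReal_rpow_of_nonneg dist_nonneg hs]

lemma lintegral_lintegral_lt_top_iff_of_le {α β : Type*} [MeasurableSpace α] [MeasurableSpace β]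
    {μ : Measure α} {ν : Measure β} {f g : α → β → ℝ≥0∞} {a b : ℝ≥0∞} (ha : a ≠ 0) (hb : b ≠ ⊤)
    (h : ∀ᵐ x ∂μ, ∀ᵐ y ∂ν, a * g x y ≤ f x y ∧ f x y ≤ b * g x y) :
    ∫⁻ x, ∫⁻ y, f x y ∂ν ∂μ < ⊤ ↔ ∫⁻ x, ∫⁻ y, g x y ∂ν ∂μ < ⊤ := by
  have hlow : a * ∫⁻ x, ∫⁻ y, g x y ∂ν ∂μ ≤ ∫⁻ x, ∫⁻ y, f x y ∂ν ∂μ :=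
    (lintegral_const_mul_le _ _).trans <| lintegral_mono_ae <| h.mono fun x hx =>
      (lintegral_const_mul_le _ _).trans <| lintegral_mono_ae <| hx.mono fun _ hy => hy.1
  have hup : ∫⁻ x, ∫⁻ y, f x y ∂ν ∂μ ≤ b * ∫⁻ x, ∫⁻ y, g x y ∂ν ∂μ := by
    rw [← lintegral_const_mul' _ _ hb]
    refine lintegral_mono_ae <| h.mono fun x hx => ?_
    rw [← lintegral_const_mul' _ _ hb]
    exact lintegral_mono_ae <| hx.mono fun _ hy => hy.2
  refine ⟨fun hf => ?_, fun hg => hup.trans_lt (ENNReal.mul_lt_top hb.lt_top hg)⟩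
  exact (ENNReal.lt_top_of_mul_ne_top_right (hlow.trans_lt hf).ne ha)

section HaarMeasure

variable {E : Type*} [NormedAddCommGroup E] [NormedSpace ℝ E] [FiniteDimensional ℝ E]
  [MeasurableSpace E] [BorelSpace E] (μ : Measure E) [μ.IsAddHaarMeasure]

lemma setLIntegral_enorm_rpow_neg_lt_top [Nontrivial E] {s : Set E} (hs : Bornology.IsBounded s)
    {a : ℝ} (ha : a < Module.finrank ℝ E) : ∫⁻ x in s, ‖x‖ₑ ^ (-a) ∂μ < ⊤ := by
  obtain ⟨r, hsr⟩ := hs.subset_ball 0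
  refine (lintegral_mono_set hsr).trans_lt ?_
  rcases le_or_gt r 0 with hr | hr
  · simp [ball_eq_empty.2 hr]
  have hint : IntegrableOn (fun x : E => ‖x‖ ^ (-a)) (ball 0 r) μ := by
    rw [integrableOn_fun_norm_addHaar μ (f := fun y => y ^ (-a))]
    have hd := Module.finrank_pos (R := ℝ) (M := E)
    refine ((intervalIntegral.integrableOn_Ioo_rpow_iff hr).2
      (?_ : -1 < ((Module.finrank ℝ E - 1 : ℕ) : ℝ) + -a)).congr_fun (fun y hy => ?_)
      measurableSet_Ioo
    · rw [Nat.cast_sub hd]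
      push_cast
      linarith
    · simp [Real.rpow_add hy.1, Real.rpow_natCast]
  refine lt_of_eq_of_lt (setLIntegral_congr_fun_ae measurableSet_ball ?_) hint.2
  filter_upwards [compl_mem_ae_iff.2 (measure_singleton (0 : E))] with x hx _
  have hx : 0 < ‖x‖ := norm_pos_iff.2 hx
  rw [Real.enorm_eq_ofReal (Real.rpow_nonneg hx.le _), ← ENNReal.ofReal_rpow_of_pos hx,
    ofReal_norm]

lemma measure_ball_inter_ge_of_convex {C : Set E} (hC : Convex ℝ C) {x : E} (hx : x ∈ C)
    {D t r : ℝ} (hD : ∀ y ∈ C, dist y x ≤ D) (ht₀ : 0 ≤ t) (ht₁ : t ≤ 1) (htr : t * D < r) :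
    ENNReal.ofReal (t ^ Module.finrank ℝ E) * μ C ≤ μ (ball x r ∩ C) := by
  rw [← abs_of_nonneg (pow_nonneg ht₀ _), ← Measure.addHaar_image_homothety]
  refine measure_mono ?_
  rintro _ ⟨y, hy, rfl⟩
  rw [AffineMap.homothety_apply, vsub_eq_sub, vadd_eq_add]
  refine ⟨?_, add_comm x _ ▸ hC.add_smul_sub_mem hx hy ⟨ht₀, ht₁⟩⟩
  rw [mem_ball, dist_eq_norm, add_sub_cancel_right, norm_smul, Real.norm_of_nonneg ht₀,
    ← dist_eq_norm]
  exact (mul_le_mul_of_nonneg_left (hD y hy) ht₀).trans_lt htr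

end HaarMeasure

lemma norm_le_dist_of_inner_nonpos {F : Type*} [NormedAddCommGroup F] [InnerProductSpace ℝ F]
    {x y : F} (h : inner ℝ x y ≤ 0) : ‖x‖ ≤ dist x y := by
  rw [dist_eq_norm]
  nlinarith [norm_sub_sq_real x y, norm_nonneg (x - y), norm_nonneg x, sq_nonneg ‖y‖]

section InnerProductSpace

variable {E : Type*} [NormedAddCommGroup E] [InnerProductSpace ℝ E] [FiniteDimensional ℝ E]
  [MeasurableSpace E] [BorelSpace E] [Nontrivial E] (μ : Measure E) [μ.IsAddHaarMeasure]

lemma setLIntegral_setLIntegral_edist_rpow_neg_lt_top {A B : Set E} (hA : MeasurableSet A)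
    (hB : MeasurableSet B) (hA' : Bornology.IsBounded A) (hB' : Bornology.IsBounded B)
    (hAB : ∀ x ∈ A, ∀ y ∈ B, inner ℝ x y ≤ 0) {s : ℝ} (hs₀ : 0 ≤ s)
    (hs : s < 2 * Module.finrank ℝ E) :
    ∫⁻ x in A, ∫⁻ y in B, edist x y ^ (-s) ∂μ ∂μ < ⊤ := by
  have hbound : ∀ x ∈ A, ∀ y ∈ B, edist x y ^ (-s) ≤ ‖x‖ₑ ^ (-(s / 2)) * ‖y‖ₑ ^ (-(s / 2)) := by
    intro x hx y hy
    have hxy : ‖x‖ₑ ≤ edist x y := by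
      rw [← ofReal_norm, edist_dist]
      exact ENNReal.ofReal_le_ofReal (norm_le_dist_of_inner_nonpos (hAB x hx y hy))
    have hyx : ‖y‖ₑ ≤ edist x y := by
      rw [← ofReal_norm, edist_dist, dist_comm]
      exact ENNReal.ofReal_le_ofReal
        (norm_le_dist_of_inner_nonpos (real_inner_comm x y ▸ hAB x hx y hy))
    rw [show -s = -(s / 2) * 2 by ring, ENNReal.rpow_mul, ENNReal.rpow_two, sq]
    exact mul_le_mul' (ENNReal.rpow_neg_le_rpow_neg (by positivity) hxy)
      (ENNReal.rpow_neg_le_rpow_neg (by positivity) hyx)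
  have hmeas : Measurable fun y : E => ‖y‖ₑ ^ (-(s / 2)) := by fun_prop
  have ha : s / 2 < Module.finrank ℝ E := by linarith
  calc ∫⁻ x in A, ∫⁻ y in B, edist x y ^ (-s) ∂μ ∂μ
      ≤ ∫⁻ x in A, ∫⁻ y in B, ‖x‖ₑ ^ (-(s / 2)) * ‖y‖ₑ ^ (-(s / 2)) ∂μ ∂μ :=
        setLIntegral_mono' hA fun x hx => setLIntegral_mono' hB fun y hy => hbound x hx y hy
    _ = (∫⁻ x in A, ‖x‖ₑ ^ (-(s / 2)) ∂μ) * ∫⁻ y in B, ‖y‖ₑ ^ (-(s / 2)) ∂μ := by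
        simp_rw [lintegral_const_mul _ hmeas]
        exact lintegral_mul_const _ hmeas
    _ < ⊤ := ENNReal.mul_lt_top (setLIntegral_enorm_rpow_neg_lt_top μ hA' ha)
        (setLIntegral_enorm_rpow_neg_lt_top μ hB' ha)

end InnerProductSpace

section MetricMeasureSpace

variable {X : Type*} [MetricSpace X] [MeasurableSpace X]

noncomputable def gagliardoEnergy (μ : Measure X) (p s : ℝ) (u : X → ℝ) : ℝ≥0∞ :=
  ∫⁻ x, ∫⁻ y, ENNReal.ofReal (|u x - u y| ^ p) / ENNReal.ofReal (dist x y ^ s) ∂μ ∂μ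

def IsAhlforsRegularUpTo (μ : Measure X) (k R : ℝ) : Prop :=
  ∃ c C : ℝ≥0∞, c ≠ 0 ∧ C ≠ ⊤ ∧ ∀ᵐ x ∂μ, ∀ r, 0 < r → r ≤ R →
    c * ENNReal.ofReal (r ^ k) ≤ μ (ball x r) ∧ μ (ball x r) ≤ C * ENNReal.ofReal (r ^ k)

theorem besovEnergy_lt_top_iff {μ : Measure X} {k R : ℝ} (hμ : IsAhlforsRegularUpTo μ k R)
    (hR : ∀ᵐ x ∂μ, ∀ᵐ y ∂μ, dist x y ≤ R) {p : ℝ} (hp : p ≠ 0) (θ : ℝ) (u : X → ℝ) :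
    besovEnergy μ p θ u < ⊤ ↔ gagliardoEnergy μ p (k + θ * p) u < ⊤ := by
  obtain ⟨c, C, hc, hC, hreg⟩ := hμ
  refine lintegral_lintegral_lt_top_iff_of_le (ENNReal.inv_ne_zero.2 hC)
    (ENNReal.inv_ne_top.2 hc) ?_
  filter_upwards [hreg, hR] with x hx hxR
  filter_upwards [hxR] with y hy
  rcases eq_or_ne x y with rfl | hxy
  · simp [Real.zero_rpow hp]
  have hd : 0 < dist x y := dist_pos.2 hxy
  set N := ENNReal.ofReal (|u x - u y| ^ p)
  set A := ENNReal.ofReal (dist x y ^ (θ * p))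
  set B := ENNReal.ofReal (dist x y ^ k)
  have hAB : ENNReal.ofReal (dist x y ^ (k + θ * p)) = A * B := by
    rw [Real.rpow_add hd, ENNReal.ofReal_mul (by positivity), mul_comm]
  have hAB₀ : A * B ≠ 0 := by positivity
  have hABt : A * B ≠ ⊤ := ENNReal.mul_ne_top ENNReal.ofReal_ne_top ENNReal.ofReal_ne_top
  have hscale : ∀ a : ℝ≥0∞, N / (A * (a * B)) = a⁻¹ * (N / (A * B)) := fun a => by
    rw [div_eq_mul_inv, div_eq_mul_inv, mul_left_comm, ENNReal.mul_inv (.inr hABt) (.inr hAB₀)]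
    ring
  obtain ⟨hlow, hup⟩ := hx (dist x y) hd hy
  rw [hAB, ← hscale, ← hscale]
  exact ⟨ENNReal.div_le_div_left (by gcongr) N, ENNReal.div_le_div_left (by gcongr) N⟩

end MetricMeasureSpace

lemma lintegral_union_indicator_jump {α : Type*} [MeasurableSpace α] {μ : Measure α}
    {A B : Set α} (hA : MeasurableSet A) (hB : MeasurableSet B) (hAB : μ (A ∩ B) = 0)
    {p : ℝ} (hp : p ≠ 0) (K : α → α → ℝ≥0∞) :
    ∫⁻ x in A ∪ B, ∫⁻ y in A ∪ B, ENNReal.ofReal (|A.indicator (fun _ => (1:ℝ)) x -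
        A.indicator (fun _ => (1:ℝ)) y| ^ p) / K x y ∂μ ∂μ
      = ∫⁻ x in A, ∫⁻ y in B, (K x y)⁻¹ ∂μ ∂μ + ∫⁻ x in B, ∫⁻ y in A, (K x y)⁻¹ ∂μ ∂μ := by
  set F := fun x y => ENNReal.ofReal (|A.indicator (fun _ => (1:ℝ)) x -
      A.indicator (fun _ => (1:ℝ)) y| ^ p) / K x y
  have hsame : ∀ x y, (x ∈ A ↔ y ∈ A) → F x y = 0 := by
    intro x y hxy
    by_cases hx : x ∈ A <;> by_cases hy : y ∈ A <;> simp_all [F, Real.zero_rpow hp]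
  have hdiff : ∀ x y, ¬(x ∈ A ↔ y ∈ A) → F x y = (K x y)⁻¹ := by
    intro x y hxy
    by_cases hx : x ∈ A <;> by_cases hy : y ∈ A <;> simp_all [F]
  have hB' : MeasurableSet (B \ A) := hB.diff hA
  have hdisj : Disjoint A (B \ A) := Set.disjoint_sdiff_right
  have hae : B \ A =ᵐ[μ] B := sdiff_ae_eq_self.2 (by rwa [Set.inter_comm] at hAB)
  have hinA : ∀ x ∈ A, ∫⁻ y in A ∪ (B \ A), F x y ∂μ = ∫⁻ y in B, (K x y)⁻¹ ∂μ := by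
    intro x hx
    rw [lintegral_union hB' hdisj,
      setLIntegral_congr_fun hA fun y hy => hsame x y (by simp [hx, hy]),
      setLIntegral_congr_fun hB' fun y hy => hdiff x y (by simp [hx, hy.2]), lintegral_zero,
      zero_add]
    exact setLIntegral_congr hae
  have hinB : ∀ x ∈ B \ A, ∫⁻ y in A ∪ (B \ A), F x y ∂μ = ∫⁻ y in A, (K x y)⁻¹ ∂μ := by
    intro x hx
    rw [lintegral_union hB' hdisj,
      setLIntegral_congr_fun hA fun y hy => hdiff x y (by simp [hx.2, hy]),
      setLIntegral_congr_fun hB' fun y hy => hsame x y (by simp [hx.2, hy.2]), lintegral_zero,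
      add_zero]
  rw [← Set.union_sdiff_self, lintegral_union hB' hdisj, setLIntegral_congr_fun hA hinA,
    setLIntegral_congr_fun hB' hinB]
  exact congrArg _ (setLIntegral_congr hae)

lemma EuclideanSpace.dist_le_sqrt_card_mul {ι : Type*} [Fintype ι] {x y : EuclideanSpace ℝ ι}
    {c : ℝ} (hc : 0 ≤ c) (h : ∀ i, |x i - y i| ≤ c) : dist x y ≤ √(Fintype.card ι) * c := by
  rw [EuclideanSpace.dist_eq, ← Real.sqrt_sq hc, ← Real.sqrt_mul (Nat.cast_nonneg _)]
  gcongr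
  calc ∑ i, dist (x i) (y i) ^ 2 ≤ ∑ _i : ι, c ^ 2 :=
        Finset.sum_le_sum fun i _ => pow_le_pow_left₀ dist_nonneg (h i) 2
    _ = Fintype.card ι * c ^ 2 := by simp

section Cube

variable {n : ℕ}

def cube (n : ℕ) (a b : ℝ) : Set (EuclideanSpace ℝ (Fin n)) := {x | ∀ i, x i ∈ Set.Icc a b}

lemma cube_eq_preimage (a b : ℝ) :
    cube n a b = WithLp.ofLp ⁻¹' Set.Icc (fun _ => a) (fun _ => b) := by
  ext x
  simp [cube, Pi.le_def, forall_and]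

lemma measurableSet_cube (a b : ℝ) : MeasurableSet (cube n a b) := by
  rw [cube_eq_preimage]
  exact measurableSet_Icc.preimage (WithLp.measurable_ofLp 2 _)

lemma volume_cube (a b : ℝ) : volume (cube n a b) = ENNReal.ofReal (b - a) ^ n := by
  rw [cube_eq_preimage, (PiLp.volume_preserving_ofLp (Fin n)).measure_preimage
    measurableSet_Icc.nullMeasurableSet, Real.volume_Icc_pi]
  simp

lemma cube_subset_cube {a b a' b' : ℝ} (ha : a' ≤ a) (hb : b ≤ b') : cube n a b ⊆ cube n a' b' :=
  fun _ hx i => ⟨ha.trans (hx i).1, (hx i).2.trans hb⟩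

lemma convex_cube (a b : ℝ) : Convex ℝ (cube n a b) := by
  intro x hx y hy s t hs ht hst i
  simp only [PiLp.add_apply, PiLp.smul_apply, smul_eq_mul]
  have ha : a = s * a + t * a := by rw [← add_mul, hst, one_mul]
  have hb : b = s * b + t * b := by rw [← add_mul, hst, one_mul]
  constructor <;> nlinarith [(hx i).1, (hx i).2, (hy i).1, (hy i).2]

lemma dist_le_of_mem_cube {a b : ℝ} {x y : EuclideanSpace ℝ (Fin n)} (hx : x ∈ cube n a b)
    (hy : y ∈ cube n a b) : dist x y ≤ √n * |b - a| := by
  refine (EuclideanSpace.dist_le_sqrt_card_mul (abs_nonneg (b - a)) fun i => ?_).trans_eq (by simp)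
  rw [abs_le]
  constructor <;> linarith [(hx i).1, (hx i).2, (hy i).1, (hy i).2, le_abs_self (b - a)]

lemma isBounded_cube (a b : ℝ) : Bornology.IsBounded (cube n a b) :=
  isBounded_iff.2 ⟨_, fun _ hx _ hy => dist_le_of_mem_cube hx hy⟩

lemma setLIntegral_cube_eq_top_of_le (hn : n ≠ 0) {f : EuclideanSpace ℝ (Fin n) → ℝ≥0∞} {c : ℝ≥0∞}
    (hc : c ≠ 0)
    (hf : ∀ r, 0 < r → r ≤ 1 → ∀ x ∈ cube n 0 r, c * ENNReal.ofReal r ^ (-(n : ℝ)) ≤ f x) :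
    ∫⁻ x in cube n 0 1, f x = ⊤ := by
  set ρ : ℕ → ℝ := fun k => 2⁻¹ ^ k
  set S : ℕ → Set (EuclideanSpace ℝ (Fin n)) := fun k => cube n 0 (ρ k) \ cube n 0 (ρ (k + 1))
  have hρ₀ : ∀ k, 0 < ρ k := fun k => by positivity
  have hρ₁ : ∀ k, ρ k ≤ 1 := fun k => pow_le_one₀ (by norm_num) (by norm_num)
  have hρ : Antitone ρ := fun j k h => pow_le_pow_of_le_one (by norm_num) (by norm_num) h
  have hS : ∀ k, MeasurableSet (S k) := fun _ =>
    (measurableSet_cube _ _).diff (measurableSet_cube _ _)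
  have hdisj : Pairwise (Function.onFun Disjoint S) :=
    (pairwise_disjoint_on S).2 fun j k hjk => Set.disjoint_left.2 fun x hxj hxk =>
      hxj.2 (cube_subset_cube le_rfl (hρ hjk) hxk.1)
  have hvol : ∀ k, volume (S k) = ENNReal.ofReal (ρ k) ^ n * (1 - 2⁻¹ ^ n) := by
    intro k
    have hρ2 : ρ (k + 1) = ρ k * 2⁻¹ := pow_succ _ _
    rw [measure_sdiff (cube_subset_cube le_rfl (hρ k.le_succ))
      (measurableSet_cube _ _).nullMeasurableSet
      (by rw [volume_cube]; exact ENNReal.pow_ne_top ENNReal.ofReal_ne_top),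
      volume_cube, volume_cube, sub_zero, sub_zero, hρ2, ENNReal.ofReal_mul (hρ₀ k).le, mul_pow,
      ENNReal.mul_sub fun _ _ => ENNReal.pow_ne_top ENNReal.ofReal_ne_top, mul_one,
      ENNReal.ofReal_inv_of_pos two_pos, ENNReal.ofReal_ofNat]
  have hshell : ∀ k, c * (1 - 2⁻¹ ^ n) ≤ ∫⁻ x in S k, f x := by
    intro k
    have hR : ENNReal.ofReal (ρ k) ^ n ≠ 0 := pow_ne_zero _ (ENNReal.ofReal_pos.2 (hρ₀ k)).ne'
    calc c * (1 - 2⁻¹ ^ n) = c * ENNReal.ofReal (ρ k) ^ (-(n : ℝ)) * volume (S k) := by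
          rw [hvol, ENNReal.rpow_neg, ENNReal.rpow_natCast, mul_assoc, ← mul_assoc _ (_ ^ n),
            ENNReal.inv_mul_cancel hR (ENNReal.pow_ne_top ENNReal.ofReal_ne_top), one_mul]
      _ = ∫⁻ _ in S k, c * ENNReal.ofReal (ρ k) ^ (-(n : ℝ)) := (setLIntegral_const _ _).symm
      _ ≤ ∫⁻ x in S k, f x := setLIntegral_mono' (hS k) fun x hx => hf _ (hρ₀ k) (hρ₁ k) x hx.1
  have hpos : c * (1 - 2⁻¹ ^ n) ≠ 0 :=
    mul_ne_zero hc (tsub_pos_of_lt (pow_lt_one₀ (by simp) (ENNReal.inv_lt_one.2 one_lt_two) hn)).ne'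
  refine eq_top_iff.2 ?_
  calc ⊤ = ∑' _ : ℕ, c * (1 - 2⁻¹ ^ n) := (ENNReal.tsum_const_eq_top_of_ne_zero hpos).symm
    _ ≤ ∑' k, ∫⁻ x in S k, f x := ENNReal.tsum_le_tsum hshell
    _ = ∫⁻ x in ⋃ k, S k, f x := (lintegral_iUnion hS hdisj f).symm
    _ ≤ ∫⁻ x in cube n 0 1, f x := lintegral_mono_set <| Set.iUnion_subset fun k =>
        Set.sdiff_subset.trans (cube_subset_cube le_rfl (hρ₁ k))

end Cube

section GluedCubes

variable {n : ℕ}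

lemma inner_nonpos_of_mem_cubeP_of_mem_cubeN {x y : EuclideanSpace ℝ (Fin n)} (hx : x ∈ cubeP n)
    (hy : y ∈ cubeN n) : inner ℝ x y ≤ 0 := by
  simp only [PiLp.inner_apply, RCLike.inner_apply, conj_trivial]
  exact Finset.sum_nonpos fun i _ => by nlinarith [(hx i).1, (hy i).2]

lemma volume_cubeP_inter_cubeN (hn : n ≠ 0) : volume (cubeP n ∩ cubeN n) = 0 := by
  have hsub : cubeP n ∩ cubeN n ⊆ cube n 0 0 := fun x hx i => ⟨(hx.1 i).1, (hx.2 i).2⟩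
  exact measure_mono_null hsub (by simp [volume_cube, hn])

lemma setLIntegral_cubeP_setLIntegral_cubeN_edist_rpow_neg_eq_top (hn : n ≠ 0) {s : ℝ}
    (hs : 2 * n ≤ s) : ∫⁻ x in cubeP n, ∫⁻ y in cubeN n, edist x y ^ (-s) = ⊤ := by
  have hs₀ : 0 ≤ s := by linarith [(Nat.cast_nonneg n : (0 : ℝ) ≤ n)]
  set K := ENNReal.ofReal (2 * √n)
  have hK : K ^ (-s) ≠ 0 := by
    rw [ENNReal.rpow_neg]
    exact ENNReal.inv_ne_zero.2 (ENNReal.rpow_ne_top_of_nonneg hs₀ ENNReal.ofReal_ne_top)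
  refine setLIntegral_cube_eq_top_of_le hn hK fun r hr₀ hr₁ x hx => ?_
  have hdist : ∀ y ∈ cube n (-r) 0, edist x y ≤ K * ENNReal.ofReal r := by
    intro y hy
    rw [← ENNReal.ofReal_mul (by positivity), edist_le_ofReal (by positivity)]
    refine (EuclideanSpace.dist_le_sqrt_card_mul (c := 2 * r) (by positivity) fun i => ?_).trans_eq
      (by rw [Fintype.card_fin]; ring)
    rw [abs_le]
    constructor <;> linarith [(hx i).1, (hx i).2, (hy i).1, (hy i).2]
  calc K ^ (-s) * ENNReal.ofReal r ^ (-(n : ℝ))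
      ≤ K ^ (-s) * ENNReal.ofReal r ^ (-s + n) :=
        mul_le_mul_right
          (ENNReal.rpow_le_rpow_of_exponent_ge (ENNReal.ofReal_le_one.2 hr₁) (by linarith)) _
    _ = (K * ENNReal.ofReal r) ^ (-s) * volume (cube n (-r) 0) := by
        rw [volume_cube, zero_sub, neg_neg, ENNReal.mul_rpow_of_ne_top ENNReal.ofReal_ne_top
          ENNReal.ofReal_ne_top, ENNReal.rpow_add _ _ (ENNReal.ofReal_pos.2 hr₀).ne'
          ENNReal.ofReal_ne_top, ENNReal.rpow_natCast, mul_assoc]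
    _ = ∫⁻ _ in cube n (-r) 0, (K * ENNReal.ofReal r) ^ (-s) := (setLIntegral_const _ _).symm
    _ ≤ ∫⁻ y in cube n (-r) 0, edist x y ^ (-s) := setLIntegral_mono' (measurableSet_cube _ _)
        fun y hy => ENNReal.rpow_neg_le_rpow_neg hs₀ (hdist y hy)
    _ ≤ ∫⁻ y in cubeN n, edist x y ^ (-s) :=
        lintegral_mono_set (cube_subset_cube (by linarith) le_rfl)

lemma isAhlforsRegularUpTo_cubeP_union_cubeN (hn : n ≠ 0) :
    IsAhlforsRegularUpTo (volume.restrict (cubeP n ∪ cubeN n)) n (2 * √n) := by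
  have : NeZero n := ⟨hn⟩
  have hX : MeasurableSet (cubeP n ∪ cubeN n) :=
    (measurableSet_cube _ _).union (measurableSet_cube _ _)
  refine ⟨ENNReal.ofReal ((2 * √n) ^ n)⁻¹, volume (ball (0 : EuclideanSpace ℝ (Fin n)) 1),
    (ENNReal.ofReal_pos.2 (by positivity)).ne', measure_ball_lt_top.ne, ?_⟩
  filter_upwards [ae_restrict_mem hX] with x hx r hr hrR
  rw [Measure.restrict_apply measurableSet_ball, Real.rpow_natCast]
  refine ⟨?_, (measure_mono Set.inter_subset_left).trans_eq ?_⟩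
  · -- Shrinking the unit cube through `x` by the factor `r / (2√n)` about `x` lands in `ball x r`.
    have hunit : ∀ a b : ℝ, b - a = 1 → x ∈ cube n a b → cube n a b ⊆ cubeP n ∪ cubeN n →
        ENNReal.ofReal ((2 * √n) ^ n)⁻¹ * ENNReal.ofReal (r ^ n)
          ≤ volume (ball x r ∩ (cubeP n ∪ cubeN n)) := by
      intro a b hab hxQ hQ
      have hsqrt : 0 < √(n : ℝ) := by positivity
      have h := measure_ball_inter_ge_of_convex volume (convex_cube a b) hxQ
        (fun y hy => (dist_le_of_mem_cube hy hxQ).trans_eq (by rw [hab, abs_one, mul_one]))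
        (D := √n) (t := r / (2 * √n)) (r := r) (by positivity) ((div_le_one (by positivity)).2 hrR)
        (by rw [div_mul_eq_mul_div, mul_comm 2, ← div_div, mul_div_cancel_right₀ _ hsqrt.ne']
            linarith)
      rw [volume_cube, hab, ENNReal.ofReal_one, one_pow, mul_one, finrank_euclideanSpace_fin,
        div_pow, div_eq_inv_mul, ENNReal.ofReal_mul (by positivity)] at h
      exact h.trans (measure_mono (Set.inter_subset_inter_right _ hQ))
    rcases hx with hx | hx
    · exact hunit 0 1 (by norm_num) hx Set.subset_union_left
    · exact hunit (-1) 0 (by norm_num) hx Set.subset_union_right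
  · rw [Measure.addHaar_ball _ _ hr.le, finrank_euclideanSpace_fin, mul_comm]

lemma ae_ae_dist_le_of_cubeP_union_cubeN :
    ∀ᵐ x ∂volume.restrict (cubeP n ∪ cubeN n), ∀ᵐ y ∂volume.restrict (cubeP n ∪ cubeN n),
      dist x y ≤ 2 * √n := by
  have hX : MeasurableSet (cubeP n ∪ cubeN n) :=
    (measurableSet_cube _ _).union (measurableSet_cube _ _)
  have hsub : cubeP n ∪ cubeN n ⊆ cube n (-1) 1 :=
    Set.union_subset (cube_subset_cube (by norm_num) le_rfl) (cube_subset_cube le_rfl (by norm_num))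
  filter_upwards [ae_restrict_mem hX] with x hx
  filter_upwards [ae_restrict_mem hX] with y hy
  exact (dist_le_of_mem_cube (hsub hx) (hsub hy)).trans_eq (by norm_num [mul_comm])

lemma gagliardoEnergy_indicator_cubeP_lt_top_iff (hn : n ≠ 0) {p s : ℝ} (hp : p ≠ 0)
    (hs : 0 ≤ s) :
    gagliardoEnergy (volume.restrict (cubeP n ∪ cubeN n)) p s
      ((cubeP n).indicator fun _ => (1:ℝ)) < ⊤ ↔ s < 2 * n := by
  have : NeZero n := ⟨hn⟩
  have hP : MeasurableSet (cubeP n) := measurableSet_cube 0 1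
  have hN : MeasurableSet (cubeN n) := measurableSet_cube (-1) 0
  have hPN x (hx : x ∈ cubeP n) y (hy : y ∈ cubeN n) := inner_nonpos_of_mem_cubeP_of_mem_cubeN hx hy
  rw [gagliardoEnergy, lintegral_union_indicator_jump hP hN (volume_cubeP_inter_cubeN hn) hp]
  simp only [inv_ofReal_dist_rpow hs]
  refine ⟨fun h => ?_, fun h => ENNReal.add_lt_top.2 ⟨?_, ?_⟩⟩
  · by_contra! hs'
    exact (ENNReal.add_lt_top.1 h).1.ne
      (setLIntegral_cubeP_setLIntegral_cubeN_edist_rpow_neg_eq_top hn hs')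
  all_goals
    refine setLIntegral_setLIntegral_edist_rpow_neg_lt_top volume ‹_› ‹_› (isBounded_cube _ _)
      (isBounded_cube _ _) ?_ hs (by rwa [finrank_euclideanSpace_fin])
  · exact hPN
  · exact fun x hx y hy => real_inner_comm x y ▸ hPN y hy x hx

end GluedCubes

/-- For `X = [0,1]^n ∪ [-1,0]^n` glued at the origin with Lebesgue measure and
`E = [0,1]^n`, the Gagliardo-type energy `∫∫ |χ_E(x)-χ_E(y)|^p / |x-y|^{n+θp}` is finite
iff `θp < n`; in particular `χ_E ∈ B^θ_{p,p}(X)` iff `θp < n`. -/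
theorem statement16 (n : ℕ) (hn : 2 ≤ n) (p θ : ℝ) (hp : 1 < p) (hθ : 0 < θ) :
    ((∫⁻ x in cubeP n ∪ cubeN n, ∫⁻ y in cubeP n ∪ cubeN n,
        ENNReal.ofReal (|(cubeP n).indicator (fun _ => (1:ℝ)) x -
            (cubeP n).indicator (fun _ => (1:ℝ)) y| ^ p) /
          ENNReal.ofReal (dist x y ^ ((n:ℝ) + θ * p)) ∂volume ∂volume) < ⊤ ↔ θ * p < n) ∧
    (MemBesov (volume.restrict (cubeP n ∪ cubeN n)) p θ
        ((cubeP n).indicator fun _ => (1:ℝ)) ↔ θ * p < n) := by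
  have hn₀ : n ≠ 0 := by omega
  have hp₀ : p ≠ 0 := by positivity
  have hgag := gagliardoEnergy_indicator_cubeP_lt_top_iff hn₀ hp₀
    (by positivity : 0 ≤ (n : ℝ) + θ * p)
  have hθp : (n : ℝ) + θ * p < 2 * n ↔ θ * p < n := by constructor <;> intro h <;> linarith
  refine ⟨hgag.trans hθp, ?_⟩
  rw [MemBesov, besovEnergy_lt_top_iff (isAhlforsRegularUpTo_cubeP_union_cubeN hn₀)
    ae_ae_dist_le_of_cubeP_union_cubeN hp₀, hgag, hθp]
  refine and_iff_right (memLp_indicator_const _ (measurableSet_cube 0 1) _ (.inr ?_))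
  rw [Measure.restrict_apply (measurableSet_cube 0 1)]
  exact measure_ne_top_of_subset Set.inter_subset_left (by simp [volume_cube])
end
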